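/- Define t₁(0) = 1, t₁(1) = 0, t₁(n) = F_{n−2} for n ≥ 2, and t₂(0) = 0, t₂(1) = 1, t₂(n) = F_{n−1} for n ≥ 2. Then for all integers n ≥ 1 and m ≥ 1: b(n,m) = t₁(n−m) if m ≤ n < 2m; b(n,m) = t₁(n−m) + t₂(n−2m) if n ≥ 2m; and b(n,m) = 0 if n < m. In particular, b(n,m) = F_{n−m−2} + F_{n−2m−1} for all n ≥ 2m + 2. -/

import Mathlib

/-- `l` is a composition of `n`: a finite list of positive integers summing to `n`
(the empty list is the unique composition of `0`). -/
def IsComposition (n : ℕ) (l : List ℕ) : Prop :=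
  (∀ x ∈ l, 0 < x) ∧ l.sum = n

/-- The Arndt condition: `σ_{2i-1} > σ_{2i}` (1-based) for every `i` with `2i ≤ ℓ`;
with 0-based indices, `l[2i] > l[2i+1]` whenever `2i+1 < l.length`. -/
def IsArndt (l : List ℕ) : Prop :=
  ∀ i : ℕ, 2 * i + 1 < l.length → l.getD (2 * i + 1) 0 < l.getD (2 * i) 0

/-- `arndt n` is the number of Arndt compositions of `n`. -/
noncomputable def arndt (n : ℕ) : ℕ :=
  Set.ncard {l : List ℕ | IsComposition n l ∧ IsArndt l}

/-- `arndtParts n m` is the number of Arndt compositions of `n` with exactly `m` parts. -/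
noncomputable def arndtParts (n m : ℕ) : ℕ :=
  Set.ncard {l : List ℕ | IsComposition n l ∧ IsArndt l ∧ l.length = m}

/-- The generalized binomial coefficient `C(a,b) = a(a-1)⋯(a-b+1)/b!` for an integer `a`
and a natural number `b` (represented as a nonnegative integer); it is `0` for negative `b`. -/
def genChoose (a b : ℤ) : ℤ :=
  if 0 ≤ b then (∏ i ∈ Finset.range b.toNat, (a - (i : ℤ))) / (b.toNat.factorial : ℤ) else 0

/-- `arndtLast n m` is the number of Arndt compositions of `n` whose last part equals `m`
(the last part of the empty composition is taken to be `0`). -/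
noncomputable def arndtLast (n m : ℕ) : ℕ :=
  Set.ncard {l : List ℕ | IsComposition n l ∧ IsArndt l ∧ l.getLastD 0 = m}

/-- `t₁(0) = 1`, `t₁(1) = 0`, `t₁(n) = F_{n-2}` for `n ≥ 2`. -/
def t1 : ℕ → ℕ
  | 0 => 1
  | 1 => 0
  | n + 2 => Nat.fib n

/-- `t₂(0) = 0`, `t₂(1) = 1`, `t₂(n) = F_{n-1}` for `n ≥ 2`. -/
def t2 : ℕ → ℕ
  | 0 => 0
  | 1 => 1
  | n + 2 => Nat.fib (n + 1)

/-!
An Arndt composition of `n` ending in `m` is `[m]`, or `[n - m, m]` with `n - m > m`, or a first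
pair `(a, b)` with `a > b ≥ 1` followed by an Arndt composition of `n - a - b` ending in `m`. There
are `⌊(s - 1)/2⌋` such pairs with `a + b = s`, so `b(·, m)` solves the recursion
`u n = f n + ∑ₖ ⌊(n - k - 1)/2⌋ u k` with forcing `f n = [n = m] + [n > 2m]`. Its solution is
unique, additive in `f` and commutes with shifts, and `t₁`, `t₂` are the solutions for the
forcings `[n = 0]` and `[n > 0]`: the second difference of the convolution is a partial sum, and
the partial sums of `t₁` are `t₂`, which reduces both to the Fibonacci recursion.
Hence `b(n, m) = t₁(n - m) + t₂(n - 2m)`, terms with negative index being `0`.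
-/

open Finset

lemma isComposition_nil_iff {n : ℕ} : IsComposition n [] ↔ n = 0 := by
  simp [IsComposition, eq_comm]

lemma isComposition_cons_iff {n a : ℕ} {l : List ℕ} :
    IsComposition n (a :: l) ↔ 0 < a ∧ a ≤ n ∧ IsComposition (n - a) l := by
  simp only [IsComposition, List.mem_cons, forall_eq_or_imp, List.sum_cons]
  constructor
  · rintro ⟨⟨ha, hl⟩, hsum⟩
    exact ⟨ha, by omega, hl, by omega⟩
  · rintro ⟨ha, han, hl, hsum⟩
    exact ⟨⟨ha, hl⟩, by omega⟩

lemma isArndt_nil : IsArndt [] := fun _ h => by simp at h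

lemma isArndt_singleton (a : ℕ) : IsArndt [a] := fun _ h => by simp at h

lemma isArndt_cons_cons {a b : ℕ} {r : List ℕ} : IsArndt (a :: b :: r) ↔ b < a ∧ IsArndt r := by
  constructor
  · intro h
    refine ⟨by simpa using h 0 (by simp), fun i hi => ?_⟩
    simpa [Nat.mul_add] using h (i + 1) (by simp; omega)
  · rintro ⟨hba, hr⟩ (_ | i) hi
    · simpa using hba
    · simpa [Nat.mul_add] using hr i (by simp at hi; omega)

def arndtPairs (s : ℕ) : Finset (ℕ × ℕ) := {p ∈ antidiagonal s | p.2 < p.1 ∧ 0 < p.2}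

lemma mem_arndtPairs {s a b : ℕ} : (a, b) ∈ arndtPairs s ↔ a + b = s ∧ b < a ∧ 0 < b := by
  simp [arndtPairs]

lemma card_arndtPairs (s : ℕ) : (arndtPairs s).card = (s - 1) / 2 := by
  rw [show (s - 1) / 2 = (Icc 1 ((s - 1) / 2)).card by simp]
  refine card_nbij' Prod.snd (fun b => (s - b, b)) ?_ ?_ ?_ fun _ _ => rfl
  · rintro ⟨a, b⟩ hp
    simp only [mem_coe, mem_arndtPairs, mem_Icc] at hp ⊢
    omega
  · intro b hb
    simp only [mem_coe, mem_arndtPairs, mem_Icc] at hb ⊢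
    omega
  · rintro ⟨a, b⟩ hp
    simp only [mem_coe, mem_arndtPairs] at hp
    simp only [Prod.mk.injEq, and_true]
    omega

open Classical in
noncomputable def arndtLastFinset (n m : ℕ) : Finset (List ℕ) :=
  {l ∈ univ.image (Composition.blocks (n := n)) | IsArndt l ∧ l.getLastD 0 = m}

lemma mem_arndtLastFinset {n m : ℕ} {l : List ℕ} :
    l ∈ arndtLastFinset n m ↔ IsComposition n l ∧ IsArndt l ∧ l.getLastD 0 = m := by
  have : l ∈ univ.image (Composition.blocks (n := n)) ↔ IsComposition n l := by
    simp only [mem_image, mem_univ, true_and, IsComposition]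
    constructor
    · rintro ⟨c, rfl⟩
      exact ⟨fun _ => c.blocks_pos, c.blocks_sum⟩
    · rintro ⟨hpos, hsum⟩
      exact ⟨⟨l, hpos _, hsum⟩, rfl⟩
  simp [arndtLastFinset, this]

lemma arndtLast_eq_card (n m : ℕ) : arndtLast n m = (arndtLastFinset n m).card := by
  rw [arndtLast, ← Set.ncard_coe_finset]
  congr
  ext l
  simp [mem_arndtLastFinset]

lemma nil_notMem_arndtLastFinset {n m : ℕ} (hm : 0 < m) : [] ∉ arndtLastFinset n m := by
  simp [mem_arndtLastFinset, hm.ne]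

lemma cons_cons_mem_arndtLastFinset {n m a b : ℕ} {r : List ℕ} :
    a :: b :: r ∈ arndtLastFinset n m ↔
      (a, b) ∈ arndtPairs (a + b) ∧ a + b ≤ n ∧ IsComposition (n - (a + b)) r ∧ IsArndt r ∧
        r.getLastD b = m := by
  simp only [mem_arndtLastFinset, isComposition_cons_iff, isArndt_cons_cons, List.getLastD_cons,
    mem_arndtPairs, Nat.sub_sub]
  constructor
  · rintro ⟨⟨-, han, hb, hbn, hr⟩, ⟨hba, hr'⟩, hlast⟩
    exact ⟨⟨trivial, hba, hb⟩, by omega, hr, hr', hlast⟩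
  · rintro ⟨⟨-, hba, hb⟩, hn, hr, hr', hlast⟩
    exact ⟨⟨by omega, by omega, hb, by omega, hr⟩, ⟨hba, hr'⟩, hlast⟩

lemma arndtLastFinset_eq {m : ℕ} (hm : 0 < m) (n : ℕ) :
    arndtLastFinset n m =
      ((if n = m then {[m]} else ∅) ∪ (if 2 * m < n then {[n - m, m]} else ∅)) ∪
        ((range n).sigma fun k => arndtPairs (n - k) ×ˢ arndtLastFinset k m).image
          fun x => x.2.1.1 :: x.2.1.2 :: x.2.2 := by
  ext l
  rcases l with _ | ⟨a, _ | ⟨b, _ | ⟨c, r⟩⟩⟩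
  · simp [mem_ite, nil_notMem_arndtLastFinset hm]
  · simp only [mem_arndtLastFinset, isComposition_cons_iff, isComposition_nil_iff,
      isArndt_singleton]
    simp [mem_ite]
    omega
  · simp [cons_cons_mem_arndtLastFinset, mem_arndtPairs, mem_ite, isComposition_nil_iff,
      isArndt_nil, nil_notMem_arndtLastFinset hm]
    omega
  · rw [cons_cons_mem_arndtLastFinset, List.getLastD_cons, ← List.getLastD_cons (a := 0),
      ← mem_arndtLastFinset]
    simp [mem_ite, mem_arndtPairs]
    constructor
    · rintro ⟨hab, hn, hr⟩
      exact Or.inr ⟨n - (a + b), by omega, ⟨by omega, hab⟩, hr⟩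
    · rintro (h | ⟨k, hk, ⟨hsum, hab⟩, hr⟩)
      · omega
      · obtain rfl : k = n - (a + b) := by omega
        exact ⟨hab, by omega, hr⟩

namespace PairRec

/-- Convolution with `s ↦ ⌊(s - 1)/2⌋ = #(arndtPairs s)`, the series `x³ / ((1 - x)(1 - x²))`. -/
def conv (u : ℕ → ℕ) (n : ℕ) : ℕ := ∑ k ∈ range n, (n - 1 - k) / 2 * u k

def shift (m : ℕ) (u : ℕ → ℕ) (n : ℕ) : ℕ := if m ≤ n then u (n - m) else 0

def Solves (f u : ℕ → ℕ) : Prop := ∀ n, u n = f n + conv u n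

@[simp] lemma shift_zero (u : ℕ → ℕ) : shift 0 u = u := funext fun _ => by simp [shift]

lemma conv_add (u v : ℕ → ℕ) (n : ℕ) : conv (u + v) n = conv u n + conv v n := by
  simp only [conv, Pi.add_apply, mul_add, sum_add_distrib]

lemma conv_congr {u v : ℕ → ℕ} {n : ℕ} (h : ∀ k < n, u k = v k) : conv u n = conv v n :=
  sum_congr rfl fun k hk => by rw [h k (mem_range.mp hk)]

lemma conv_shift (m : ℕ) (u : ℕ → ℕ) (n : ℕ) : conv (shift m u) n = shift m (conv u) n := by
  induction m generalizing n with
  | zero => simp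
  | succ m ih =>
    cases n with
    | zero => simp [conv, shift]
    | succ n =>
      have hshift : shift (m + 1) (conv u) (n + 1) = shift m (conv u) n := by simp [shift]
      rw [hshift, ← ih, conv, sum_range_succ', show shift (m + 1) u 0 = 0 by simp [shift],
        mul_zero, add_zero, conv]
      refine sum_congr rfl fun k _ => ?_
      simp only [shift, Nat.add_le_add_iff_right, Nat.add_sub_add_right]
      congr 2
      omega

lemma conv_add_two (u : ℕ → ℕ) (n : ℕ) : conv u (n + 2) = conv u n + ∑ k ∈ range n, u k := by
  rw [conv, sum_range_succ, sum_range_succ, conv, ← sum_add_distrib]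
  have h₁ : (n + 2 - 1 - (n + 1)) / 2 = 0 := by omega
  have h₂ : (n + 2 - 1 - n) / 2 = 0 := by omega
  rw [h₁, h₂, zero_mul, zero_mul, add_zero, add_zero]
  refine sum_congr rfl fun k hk => ?_
  have : (n + 2 - 1 - k) / 2 = (n - 1 - k) / 2 + 1 := by have := mem_range.mp hk; omega
  rw [this, add_one_mul]

lemma Solves.add {f g u v : ℕ → ℕ} (hu : Solves f u) (hv : Solves g v) :
    Solves (f + g) (u + v) :=
  fun n => by rw [Pi.add_apply, hu n, hv n, conv_add, Pi.add_apply]; ring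

lemma Solves.shift {f u : ℕ → ℕ} (hu : Solves f u) (m : ℕ) : Solves (shift m f) (shift m u) :=
  fun n => by
    rw [conv_shift]
    unfold PairRec.shift
    split_ifs
    · exact hu _
    · rfl

lemma Solves.unique {f u v : ℕ → ℕ} (hu : Solves f u) (hv : Solves f v) : u = v := by
  funext n
  induction n using Nat.strong_induction_on with
  | _ n ih => rw [hu n, hv n, conv_congr ih]

end PairRec

open PairRec

lemma solves_arndtLast {m : ℕ} (hm : 0 < m) :
    Solves (fun n => (if n = m then 1 else 0) + (if 2 * m < n then 1 else 0)) (arndtLast · m) := by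
  intro n
  simp only [arndtLast_eq_card]
  have hinj : Set.InjOn (fun x : (_ : ℕ) × (ℕ × ℕ) × List ℕ => x.2.1.1 :: x.2.1.2 :: x.2.2)
      ((range n).sigma fun k => arndtPairs (n - k) ×ˢ arndtLastFinset k m) := by
    rintro ⟨k, ⟨a, b⟩, r⟩ hx ⟨k', ⟨a', b'⟩, r'⟩ hx' he
    simp only [coe_sigma, Set.mem_sigma_iff, mem_coe, mem_range, mem_product, mem_arndtPairs]
      at hx hx'
    simp only [List.cons.injEq] at he
    obtain ⟨rfl, rfl, rfl⟩ := he
    obtain rfl : k = k' := by omega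
    rfl
  have hlen : ∀ l ∈ ((range n).sigma fun k => arndtPairs (n - k) ×ˢ arndtLastFinset k m).image
      (fun x => x.2.1.1 :: x.2.1.2 :: x.2.2), 3 ≤ l.length := by
    simp only [mem_image, mem_sigma, mem_product]
    rintro _ ⟨⟨k, p, _ | ⟨c, r⟩⟩, ⟨-, -, hr⟩, rfl⟩
    · exact absurd hr (nil_notMem_arndtLastFinset hm)
    · simp
  rw [arndtLastFinset_eq hm n, card_union_of_disjoint, card_union_of_disjoint,
    card_image_of_injOn hinj, card_sigma]
  · rw [apply_ite card, apply_ite card, card_singleton, card_singleton, card_empty, conv]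
    congr 1
    refine sum_congr rfl fun k _ => ?_
    rw [card_product, card_arndtPairs, Nat.sub_right_comm]
  · rw [disjoint_left]
    simp only [mem_ite, mem_singleton, notMem_empty, imp_false, not_not]
    rintro l ⟨-, hnm⟩ ⟨-, h2mn⟩
    omega
  · rw [disjoint_left]
    intro l hl hl'
    have := hlen l hl'
    simp only [mem_union] at hl
    rcases hl with hl | hl <;> split_ifs at hl <;> simp at hl <;> simp [hl] at this

lemma sum_range_t1 (n : ℕ) : ∑ k ∈ range n, t1 k = t2 n := by
  induction n with
  | zero => rfl
  | succ n ih =>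
    rw [sum_range_succ, ih]
    rcases n with _ | _ | n
    · rfl
    · rfl
    · exact (add_comm _ _).trans Nat.fib_add_two.symm

lemma sum_range_t2 (n : ℕ) : ∑ k ∈ range (n + 2), t2 k = Nat.fib (n + 2) := by
  induction n with
  | zero => rfl
  | succ n ih => rw [sum_range_succ, ih, Nat.fib_add_two (n := n + 1), add_comm]; rfl

lemma t1_add_t2 (n : ℕ) : t1 (n + 1) + t2 (n + 1) = Nat.fib (n + 1) := by
  rcases n with _ | n
  · rfl
  · exact Nat.fib_add_two.symm

lemma solves_t1 : Solves (fun n => if n = 0 then 1 else 0) t1 := by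
  intro n
  induction n using Nat.twoStepInduction with
  | zero => rfl
  | one => rfl
  | more n ih _ =>
    dsimp only at ih ⊢
    rw [conv_add_two, sum_range_t1, if_neg (by omega), zero_add]
    rcases n with _ | n
    · rfl
    · rw [if_neg (by omega), zero_add] at ih
      rw [← ih, t1_add_t2]
      rfl

lemma solves_t2 : Solves (fun n => if 0 < n then 1 else 0) t2 := by
  intro n
  induction n using Nat.twoStepInduction with
  | zero => rfl
  | one => rfl
  | more n ih _ =>
    dsimp only at ih ⊢
    rw [conv_add_two, if_pos (by omega)]
    rcases n with _ | n
    · rfl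
    · rw [if_pos (by omega)] at ih
      rw [← add_assoc, ← ih, add_comm (t2 _), ← sum_range_succ, sum_range_t2]
      rfl

lemma arndtLast_eq_shift {m : ℕ} (hm : 0 < m) (n : ℕ) :
    arndtLast n m = shift m t1 n + shift (2 * m) t2 n := by
  have hforcing : (fun n => (if n = m then 1 else 0) + (if 2 * m < n then 1 else 0)) =
      shift m (fun n => if n = 0 then 1 else 0) +
        shift (2 * m) (fun n => if 0 < n then 1 else 0) := by
    funext n
    simp only [Pi.add_apply, shift]
    split_ifs <;> omega
  have h := (solves_arndtLast hm).unique
    (hforcing ▸ (solves_t1.shift m).add (solves_t2.shift (2 * m)))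
  exact congrFun h n

lemma t1_eq_fib {n : ℕ} (hn : 2 ≤ n) : t1 n = Nat.fib (n - 2) := by
  obtain ⟨k, rfl⟩ := Nat.exists_eq_add_of_le' hn
  rfl

lemma t2_eq_fib {n : ℕ} (hn : 2 ≤ n) : t2 n = Nat.fib (n - 1) := by
  obtain ⟨k, rfl⟩ := Nat.exists_eq_add_of_le' hn
  rfl

/-- for `n, m ≥ 1`: `b(n,m) = t₁(n-m)` if `m ≤ n < 2m`;
`b(n,m) = t₁(n-m) + t₂(n-2m)` if `n ≥ 2m`; and `b(n,m) = 0` if `n < m`.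
In particular `b(n,m) = F_{n-m-2} + F_{n-2m-1}` for all `n ≥ 2m+2`. -/
theorem arndtLast_formula :
    (∀ n m : ℕ, 1 ≤ n → 1 ≤ m →
      (m ≤ n → n < 2 * m → arndtLast n m = t1 (n - m)) ∧
      (2 * m ≤ n → arndtLast n m = t1 (n - m) + t2 (n - 2 * m)) ∧
      (n < m → arndtLast n m = 0)) ∧
    (∀ n m : ℕ, 1 ≤ m → 2 * m + 2 ≤ n →
      arndtLast n m = Nat.fib (n - m - 2) + Nat.fib (n - 2 * m - 1)) := by
  refine ⟨fun n m _ hm => ⟨fun h₁ h₂ => ?_, fun h => ?_, fun h => ?_⟩, fun n m hm hn => ?_⟩ <;>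
    rw [arndtLast_eq_shift hm, shift, shift]
  · rw [if_pos h₁, if_neg (by omega), add_zero]
  · rw [if_pos (by omega), if_pos h]
  · rw [if_neg (by omega), if_neg (by omega)]
  · rw [if_pos (by omega), if_pos (by omega), t1_eq_fib (by omega), t2_eq_fib (by omega)]
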